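/- Let L₁ be a finite list of distinct locations with bit-valued tags t : L₁ → {0,1} summing to 1, L₂ a finite list of distinct locations with bit-valued tags t' : L₂ → {0,1} summing to 1, and c ∈ {0,1}. Define L₃ = L₁ ∪ L₂ and for ℓ ∈ L₃ define t''(ℓ) = c·t'(ℓ) + (1−c)·t(ℓ) if ℓ ∈ L₁ ∩ L₂, t''(ℓ) = (1−c)·t(ℓ) if ℓ ∈ L₁ \ L₂, and t''(ℓ) = c·t'(ℓ) if ℓ ∈ L₂ \ L₁. Then t'' is bit-valued and the sum of t'' over L₃ equals 1. -/

import Mathlib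

/-! Since `c` is a bit, the conditional assignment selects one of the two pointers: for `c = 0`
the new tags are those of `t` on `L₁` extended by zero to `L₁ ∪ L₂`, for `c = 1` those of `t'` on
`L₂` extended by zero. -/

open Finset

def IsOneHot {α R : Type*} [AddCommMonoid R] [One R] (s : Finset α) (f : α → R) : Prop :=
  (∀ x ∈ s, f x = 0 ∨ f x = 1) ∧ ∑ x ∈ s, f x = 1

theorem IsOneHot.of_eqOn_indicator {α R : Type*} [AddCommMonoid R] [One R] {s t : Finset α}
    {f g : α → R} (hg : IsOneHot s g) (hst : s ⊆ t) (hf : Set.EqOn f ((s : Set α).indicator g) t) :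
    IsOneHot t f := by
  refine ⟨fun x hx => ?_, ?_⟩
  · rw [hf hx]
    by_cases hxs : x ∈ s
    · simpa [hxs] using hg.1 x hxs
    · simp [hxs]
  · rw [sum_congr rfl fun x hx => hf hx, sum_indicator_subset g hst, hg.2]

theorem condassign_preserves_one_hot {α : Type*} [DecidableEq α]
    (L₁ L₂ : Finset α) (t t' : α → ℤ) (c : ℤ)
    (ht : ∀ ℓ ∈ L₁, t ℓ = 0 ∨ t ℓ = 1)
    (ht' : ∀ ℓ ∈ L₂, t' ℓ = 0 ∨ t' ℓ = 1)
    (hsum : ∑ ℓ ∈ L₁, t ℓ = 1)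
    (hsum' : ∑ ℓ ∈ L₂, t' ℓ = 1)
    (hc : c = 0 ∨ c = 1)
    (t'' : α → ℤ)
    (ht'' : ∀ ℓ ∈ L₁ ∪ L₂,
      t'' ℓ = if ℓ ∈ L₁ ∧ ℓ ∈ L₂ then c * t' ℓ + (1 - c) * t ℓ
              else if ℓ ∈ L₁ then (1 - c) * t ℓ
              else c * t' ℓ) :
    (∀ ℓ ∈ L₁ ∪ L₂, t'' ℓ = 0 ∨ t'' ℓ = 1) ∧ ∑ ℓ ∈ L₁ ∪ L₂, t'' ℓ = 1 := by
  suffices IsOneHot (L₁ ∪ L₂) t'' from this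
  rcases hc with rfl | rfl
  · refine IsOneHot.of_eqOn_indicator ⟨ht, hsum⟩ subset_union_left fun ℓ hℓ => ?_
    by_cases h₁ : ℓ ∈ L₁ <;> simp [ht'' ℓ hℓ, h₁]
  · refine IsOneHot.of_eqOn_indicator ⟨ht', hsum'⟩ subset_union_right fun ℓ hℓ => ?_
    have hℓ' := mem_union.1 hℓ
    by_cases h₂ : ℓ ∈ L₂ <;> simp_all
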